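/- Let (W, 𝒲, P) be a probability space, G : W → ℝ^{q×n} and g : W → ℝ^q measurable, and Z(w) := {ζ ∈ ℝ^n : G(w)·ζ ≤ g(w)}. Assume Z(w) is bounded for every w, ζ_c ∈ Z(w) for every w, and let S ⊆ ℝ^n be compact convex with 0 ∈ S and S ≠ {0}. Define σ(w) := max{σ ≥ 0 : {ζ_c + σ·s : s ∈ S} ⊆ Z(w)} (which exists), and assume σ : W → [0,∞) is measurable. Fix ε, β ∈ (0,1) and N ≥ (1+√3)²·ln(1/β)/ε, let w^{(1)}, …, w^{(N)} be i.i.d. with law P, and let σ* be the ⌈εN/2⌉-th smallest value among σ(w^{(1)}), …, σ(w^{(N)}). Then, with probability at least 1−β over the draw of the N samples, {ζ_c + σ*·s : s ∈ S} ⊆ Z^P, where Z^P := {ζ ∈ ℝ^n : P({w : G(w)·ζ ≤ g(w)}) ≥ 1 − ε}. -/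

import Mathlib

/-!
Since `Z(w)` is a polyhedron containing `ζ_c` and `ζ_c + σ(w) S`, it contains `ζ_c + τ S` for every
`0 ≤ τ ≤ σ(w)`; so the scaled SAS lies in `Z^P` as soon as `P(σ < τ) ≤ ε`. Let `q` be an
`ε`-quantile of `σ`. Then `σ* ≤ q`, hence `P(σ < σ*) ≤ ε`, unless fewer than `⌈εN/2⌉` samples
satisfy `σ ≤ q`. That count is binomial with success probability at least `ε`, and a Chernoff bound
at `t = -log 2` puts its lower tail below `2^{εN/2} e^{-εN/2}`, which is at most `β` because
`(1 + √3)² (1 - log 2) / 2 > 1`.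
-/

open MeasureTheory

instance matrixMeasurableSpace {q n : ℕ} : MeasurableSpace (Matrix (Fin q) (Fin n) ℝ) :=
  inferInstanceAs (MeasurableSpace (Fin q → Fin n → ℝ))

/-- The `r`-th smallest value among `X 1, …, X N`: the smallest `x` such that at least
`r` of the values are `≤ x`. -/
noncomputable def orderStat {N : ℕ} (X : Fin N → ℝ) (r : ℕ) : ℝ :=
  sInf {x : ℝ | r ≤ (Finset.univ.filter fun i => X i ≤ x).card}

open ProbabilityTheory Set Real
open scoped ENNReal Finset

theorem exists_quantile (μ : Measure ℝ) [IsProbabilityMeasure μ] {ε : ℝ} (hε0 : 0 < ε)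
    (hε1 : ε < 1) : ∃ q, ε ≤ μ.real (Iic q) ∧ μ.real (Iio q) ≤ ε := by
  set F := cdf μ
  obtain ⟨t₀, ht₀⟩ := ((tendsto_cdf_atBot μ).eventually (gt_mem_nhds hε0)).exists
  obtain ⟨t₁, ht₁⟩ := ((tendsto_cdf_atTop μ).eventually (lt_mem_nhds hε1)).exists
  set T := {t | ε ≤ F t}
  have hT : BddBelow T := ⟨t₀, fun t ht => (F.mono.reflect_lt (ht₀.trans_le ht)).le⟩
  refine ⟨sInf T, ?_, ?_⟩
  · rw [← cdf_eq_real]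
    refine ge_of_tendsto ((F.right_continuous _).mono Ioi_subset_Ici_self) ?_
    filter_upwards [self_mem_nhdsWithin] with t ht
    obtain ⟨t', ht'T, ht't⟩ := exists_lt_of_csInf_lt ⟨t₁, ht₁.le⟩ ht
    exact ht'T.trans (F.mono ht't.le)
  · have hIio := F.measure_Iio (tendsto_cdf_atBot μ) (sInf T)
    rw [measure_cdf, sub_zero] at hIio
    rw [measureReal_def, hIio, ENNReal.toReal_ofReal']
    refine max_le (le_of_tendsto (F.mono.tendsto_leftLim _) ?_) hε0.le
    filter_upwards [self_mem_nhdsWithin] with t ht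
    exact le_of_lt (not_le.1 fun h => (csInf_le hT h).not_gt ht)

theorem Matrix.convex_setOf_mulVec_le {m n : Type*} [Fintype n] (M : Matrix m n ℝ) (c : m → ℝ) :
    Convex ℝ {x | M.mulVec x ≤ c} :=
  (convex_Iic c).linear_preimage M.mulVecLin

theorem Convex.image_add_smul_subset_of_le {E : Type*} [AddCommGroup E] [Module ℝ E]
    {K S : Set E} {c : E} {a b : ℝ} (hK : Convex ℝ K) (hc : c ∈ K)
    (hb : (fun x => c + b • x) '' S ⊆ K) (ha : 0 ≤ a) (hab : a ≤ b) :
    (fun x => c + a • x) '' S ⊆ K := by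
  rintro _ ⟨x, hx, rfl⟩
  obtain rfl | hlt := hab.eq_or_lt
  · exact hb ⟨x, hx, rfl⟩
  have hb0 : 0 < b := ha.trans_lt hlt
  have := (hK.starConvex hc).add_smul_sub_mem (hb ⟨x, hx, rfl⟩) (div_nonneg ha hb0.le)
    ((div_le_one hb0).2 hab)
  simpa [smul_smul, div_mul_cancel₀ _ hb0.ne'] using this

theorem one_sub_le_measure_of_measureReal_compl_le {Ω : Type*} [MeasurableSpace Ω]
    {μ : Measure Ω} [IsProbabilityMeasure μ] {s : Set Ω} {a : ℝ} (ha : 0 ≤ a)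
    (h : μ.real sᶜ ≤ a) : ENNReal.ofReal (1 - a) ≤ μ s := by
  rw [ENNReal.ofReal_sub _ ha, ENNReal.ofReal_one, tsub_le_iff_right]
  calc (1 : ℝ≥0∞) = μ univ := measure_univ.symm
    _ ≤ μ s + μ sᶜ := measure_univ_le_add_compl s
    _ ≤ μ s + ENNReal.ofReal a := by
      gcongr
      rw [← ofReal_measureReal]
      exact ENNReal.ofReal_le_ofReal h

section OrderStat

variable {N : ℕ} {X : Fin N → ℝ} {r : ℕ} {q : ℝ}

theorem exists_le_of_le_card_filter (hr : 1 ≤ r) (h : r ≤ #{i | X i ≤ q}) : ∃ i, X i ≤ q := by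
  obtain ⟨i, hi⟩ := Finset.card_pos.1 (hr.trans h)
  exact ⟨i, (Finset.mem_filter.1 hi).2⟩

theorem orderStat_le (hr : 1 ≤ r) (h : r ≤ #{i | X i ≤ q}) : orderStat X r ≤ q := by
  obtain ⟨m, hm⟩ := (finite_range X).bddBelow
  refine csInf_le ⟨m, fun x hx => ?_⟩ h
  obtain ⟨i, hi⟩ := exists_le_of_le_card_filter hr hx
  exact (hm ⟨i, rfl⟩).trans hi

theorem le_orderStat {a : ℝ} (hr : 1 ≤ r) (h : r ≤ #{i | X i ≤ q}) (ha : ∀ i, a ≤ X i) :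
    a ≤ orderStat X r :=
  le_csInf ⟨q, h⟩ fun _ hx => (exists_le_of_le_card_filter hr hx).elim fun i hi => (ha i).trans hi

end OrderStat

theorem exp_mul_indicator_one {Ω : Type*} (A : Set Ω) (t : ℝ) (ω : Ω) :
    exp (t * A.indicator 1 ω) = A.indicator (fun _ => exp t - 1) ω + 1 := by
  by_cases hω : ω ∈ A <;> simp [hω]

theorem mgf_indicator_one {Ω : Type*} [MeasurableSpace Ω] {μ : Measure Ω} [IsProbabilityMeasure μ]
    {A : Set Ω} (hA : MeasurableSet A) (t : ℝ) :
    mgf (A.indicator 1) μ t = 1 + (exp t - 1) * μ.real A := by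
  simp_rw [mgf, exp_mul_indicator_one]
  rw [integral_add ((integrable_const _).indicator hA)
    (integrable_const 1), integral_indicator_const _ hA]
  simp [mul_comm, add_comm]

theorem measureReal_card_le_le {Ω ι α : Type*} [MeasurableSpace Ω] [MeasurableSpace α] [Fintype ι]
    {μ : Measure Ω} [IsProbabilityMeasure μ] {X : ι → Ω → α} (hX : ∀ i, Measurable (X i))
    (hind : iIndepFun X μ) {B : Set α} [DecidablePred (· ∈ B)] (hB : MeasurableSet B) {p : ℝ}
    (hp : ∀ i, p ≤ μ.real (X i ⁻¹' B)) (k : ℕ) :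
    μ.real {ω | #{i | X i ω ∈ B} ≤ k} ≤ 2 ^ k * (1 - p / 2) ^ Fintype.card ι := by
  set Y : ι → Ω → ℝ := fun i => (X i ⁻¹' B).indicator 1
  have hYm : ∀ i, Measurable (Y i) := fun i => measurable_one.indicator (hX i hB)
  have hY : iIndepFun Y μ := hind.comp (fun _ => B.indicator 1) fun _ => measurable_one.indicator hB
  have hsum : ∀ ω, (∑ i, Y i) ω = #{i | X i ω ∈ B} := fun ω => by
    rw [Finset.sum_apply, Finset.card_filter, Nat.cast_sum]
    refine Finset.sum_congr rfl fun i _ => ?_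
    by_cases h : X i ω ∈ B <;> simp [Y, h]
  have hmgf : ∀ i, mgf (Y i) μ (-log 2) = 1 - μ.real (X i ⁻¹' B) / 2 := fun i => by
    rw [mgf_indicator_one (hX i hB), exp_neg, exp_log two_pos]
    ring
  have hint : Integrable (fun ω => exp (-log 2 * (∑ i, Y i) ω)) μ :=
    hY.integrable_exp_mul_sum hYm fun i _ => by
      simp_rw [Y, exp_mul_indicator_one]
      exact ((integrable_const _).indicator (hX i hB)).add (integrable_const 1)
  calc μ.real {ω | #{i | X i ω ∈ B} ≤ k} = μ.real {ω | (∑ i, Y i) ω ≤ k} := by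
        simp_rw [hsum, Nat.cast_le]
    _ ≤ exp (-(-log 2) * k) * mgf (∑ i, Y i) μ (-log 2) :=
        measure_le_le_exp_mul_mgf _ (neg_nonpos.2 (log_nonneg one_le_two)) hint
    _ = 2 ^ k * ∏ i, (1 - μ.real (X i ⁻¹' B) / 2) := by
        rw [hY.mgf_sum hYm, neg_neg, exp_mul, exp_log two_pos, rpow_natCast]
        simp_rw [hmgf]
    _ ≤ 2 ^ k * ∏ _i : ι, (1 - p / 2) := by
        refine mul_le_mul_of_nonneg_left (Finset.prod_le_prod (fun i _ => ?_) fun i _ => ?_)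
          (by positivity)
        · linarith [measureReal_le_one (μ := μ) (s := X i ⁻¹' B)]
        · linarith [hp i]
    _ = 2 ^ k * (1 - p / 2) ^ Fintype.card ι := by
        rw [Finset.prod_const, Finset.card_univ]

theorem two_pow_mul_one_sub_half_pow_le {ε : ℝ} {k N : ℕ} (hk : (k : ℝ) ≤ ε * N / 2)
    (hε : ε ≤ 2) : 2 ^ k * (1 - ε / 2) ^ N ≤ exp (-(1 - log 2) * (ε * N / 2)) := by
  have h2k : (2 : ℝ) ^ k ≤ exp (log 2 * (ε * N / 2)) := by
    rw [← rpow_natCast, rpow_def_of_pos two_pos]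
    exact exp_le_exp.2 (mul_le_mul_of_nonneg_left hk (log_nonneg one_le_two))
  have hpow : (1 - ε / 2) ^ N ≤ exp (-(ε / 2)) ^ N :=
    pow_le_pow_left₀ (by linarith) (by linarith [add_one_le_exp (-(ε / 2))]) N
  calc 2 ^ k * (1 - ε / 2) ^ N ≤ exp (log 2 * (ε * N / 2)) * exp (-(ε / 2)) ^ N :=
        mul_le_mul h2k hpow (pow_nonneg (by linarith) N) (exp_nonneg _)
    _ = exp (-(1 - log 2) * (ε * N / 2)) := by
        rw [← exp_nat_mul, ← exp_add]
        ring_nf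

theorem le_one_sub_log_two_mul_of_le {ε L x : ℝ} (hε : 0 < ε) (hL : 0 ≤ L)
    (h : (1 + √3) ^ 2 * L / ε ≤ x) : L ≤ (1 - log 2) * (ε * x / 2) := by
  have hsqrt : (1.7 : ℝ) ≤ √3 := le_sqrt_of_sq_le (by norm_num)
  have hlog : log 2 < 0.7 := log_two_lt_d9.trans (by norm_num)
  have hsq : (1 + √3) ^ 2 = 4 + 2 * √3 := by
    rw [add_sq, sq_sqrt (by norm_num : (0 : ℝ) ≤ 3)]
    ring
  have hεx : 7.4 * L ≤ ε * x := by
    rw [div_le_iff₀ hε, hsq] at h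
    nlinarith
  nlinarith

theorem image_add_smul_subset_of_measureReal_lt_le {W E : Type*} [MeasurableSpace W]
    [AddCommGroup E] [Module ℝ E] (P : Measure W) [IsProbabilityMeasure P] {K : W → Set E}
    (hK : ∀ v, Convex ℝ (K v)) {c : E} (hc : ∀ v, c ∈ K v) {S : Set E} {σ : W → ℝ}
    (hσ : ∀ v, (fun x => c + σ v • x) '' S ⊆ K v) {τ ε : ℝ} (hτ : 0 ≤ τ) (hε : 0 ≤ ε)
    (hP : P.real {v | σ v < τ} ≤ ε) :
    (fun x => c + τ • x) '' S ⊆ {y | ENNReal.ofReal (1 - ε) ≤ P {v | y ∈ K v}} := by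
  intro y hy
  refine one_sub_le_measure_of_measureReal_compl_le hε ((measureReal_mono fun v hv => ?_).trans hP)
  exact not_le.1 fun h => hv ((hK v).image_add_smul_subset_of_le (hc v) (hσ v) hτ h hy)

theorem stmt7_general {W : Type*} [MeasurableSpace W] (P : Measure W) [IsProbabilityMeasure P]
    {q n : ℕ} (G : W → Matrix (Fin q) (Fin n) ℝ) (g : W → Fin q → ℝ)
    (Z : W → Set (Fin n → ℝ)) (hZ : ∀ w, Z w = {ζ | (G w).mulVec ζ ≤ g w})
    (ζc : Fin n → ℝ) (hζc : ∀ w, ζc ∈ Z w)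
    (S : Set (Fin n → ℝ))
    (σ : W → ℝ)
    (hσ : ∀ w, IsGreatest {s : ℝ | 0 ≤ s ∧ (fun x => ζc + s • x) '' S ⊆ Z w} (σ w))
    (hσmeas : Measurable σ)
    (ε β : ℝ) (hε : ε ∈ Set.Ioo (0 : ℝ) 1) (hβ : β ∈ Set.Ioo (0 : ℝ) 1)
    (N : ℕ) (hN : (1 + Real.sqrt 3) ^ 2 * Real.log (1 / β) / ε ≤ (N : ℝ))
    {Ω : Type*} [MeasurableSpace Ω] (Q : Measure Ω) [IsProbabilityMeasure Q]
    (w : Fin N → Ω → W) (hwmeas : ∀ i, Measurable (w i))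
    (hwindep : ProbabilityTheory.iIndepFun w Q)
    (hwlaw : ∀ i, Q.map (w i) = P) :
    Q {ω | (fun s => ζc + (orderStat (fun i => σ (w i ω)) ⌈ε * (N : ℝ) / 2⌉₊) • s) '' S ⊆
        {ζ : Fin n → ℝ | P {v | (G v).mulVec ζ ≤ g v} ≥ ENNReal.ofReal (1 - ε)}} ≥
      ENNReal.ofReal (1 - β) := by
  obtain ⟨hε0, hε1⟩ := hε
  obtain ⟨hβ0, hβ1⟩ := hβ
  obtain rfl : Z = fun v => {ζ | (G v).mulVec ζ ≤ g v} := funext hZ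
  have := Measure.isProbabilityMeasure_map (μ := P) hσmeas.aemeasurable
  obtain ⟨q, hq, hq'⟩ := exists_quantile (P.map σ) hε0 hε1
  rw [map_measureReal_apply hσmeas measurableSet_Iic] at hq
  rw [map_measureReal_apply hσmeas measurableSet_Iio] at hq'
  have hL : 0 < log (1 / β) := log_pos ((one_lt_div hβ0).2 hβ1)
  have hεN := le_one_sub_log_two_mul_of_le hε0 hL.le hN
  have hεN0 : 0 < ε * N / 2 :=
    pos_of_mul_pos_right (hL.trans_le hεN) (by linarith [log_two_lt_d9])
  set r := ⌈ε * (N : ℝ) / 2⌉₊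
  have hr : 1 ≤ r := Nat.one_le_ceil_iff.2 hεN0
  have hk : ((r - 1 : ℕ) : ℝ) ≤ ε * N / 2 := by
    rw [Nat.cast_sub hr, Nat.cast_one]
    linarith [Nat.ceil_lt_add_one hεN0.le]
  have hB : MeasurableSet {v | σ v ≤ q} := measurableSet_le hσmeas measurable_const
  set E := {ω | r ≤ #{i | σ (w i ω) ≤ q}}
  have hsub : E ⊆ _ := fun ω hω =>
    image_add_smul_subset_of_measureReal_lt_le P
      (fun v => Matrix.convex_setOf_mulVec_le _ _) hζc (fun v => (hσ v).1.2)
      (le_orderStat hr hω fun i => (hσ _).1.1) hε0.le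
      ((measureReal_mono fun v hv => lt_of_lt_of_le hv (orderStat_le hr hω)).trans hq')
  have htail : Q.real Eᶜ ≤ β := calc
    Q.real Eᶜ ≤ Q.real {ω | #{i | w i ω ∈ {v | σ v ≤ q}} ≤ r - 1} :=
        measureReal_mono fun ω hω => Nat.le_sub_one_of_lt (not_le.1 hω)
    _ ≤ 2 ^ (r - 1) * (1 - ε / 2) ^ N := by
        simpa using measureReal_card_le_le hwmeas hwindep hB
          (fun i => by rwa [← map_measureReal_apply (hwmeas i) hB, hwlaw i]) (r - 1)
    _ ≤ exp (-(1 - log 2) * (ε * N / 2)) := two_pow_mul_one_sub_half_pow_le hk (by linarith)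
    _ ≤ exp (-log (1 / β)) := exp_le_exp.2 (by linarith)
    _ = β := by rw [one_div, log_inv, neg_neg, exp_log hβ0]
  exact (one_sub_le_measure_of_measureReal_compl_le hβ0.le htail).trans (measure_mono hsub)

/-- Proposition 1 (Probabilistic Scaling of the SAS): if `σ*` is the
`⌈εN/2⌉`-th smallest scaling factor of `N ≥ (1+√3)² ln(1/β)/ε` i.i.d. uncertainty
samples, then with probability at least `1-β` over the samples the scaled SAS
`ζ_c + σ* • S` is contained in the `ε`-chance constraint set `Z^P`. -/
theorem stmt7 {W : Type*} [MeasurableSpace W] (P : Measure W) [IsProbabilityMeasure P]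
    {q n : ℕ} (G : W → Matrix (Fin q) (Fin n) ℝ) (g : W → Fin q → ℝ)
    (hG : Measurable G) (hg : Measurable g)
    (Z : W → Set (Fin n → ℝ)) (hZ : ∀ w, Z w = {ζ | (G w).mulVec ζ ≤ g w})
    (hZbdd : ∀ w, Bornology.IsBounded (Z w))
    (ζc : Fin n → ℝ) (hζc : ∀ w, ζc ∈ Z w)
    (S : Set (Fin n → ℝ)) (hScomp : IsCompact S) (hSconv : Convex ℝ S)
    (h0S : (0 : Fin n → ℝ) ∈ S) (hSne : S ≠ {0})
    (σ : W → ℝ)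
    (hσ : ∀ w, IsGreatest {s : ℝ | 0 ≤ s ∧ (fun x => ζc + s • x) '' S ⊆ Z w} (σ w))
    (hσmeas : Measurable σ)
    (ε β : ℝ) (hε : ε ∈ Set.Ioo (0 : ℝ) 1) (hβ : β ∈ Set.Ioo (0 : ℝ) 1)
    (N : ℕ) (hN : (1 + Real.sqrt 3) ^ 2 * Real.log (1 / β) / ε ≤ (N : ℝ))
    {Ω : Type*} [MeasurableSpace Ω] (Q : Measure Ω) [IsProbabilityMeasure Q]
    (w : Fin N → Ω → W) (hwmeas : ∀ i, Measurable (w i))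
    (hwindep : ProbabilityTheory.iIndepFun w Q)
    (hwlaw : ∀ i, Q.map (w i) = P) :
    Q {ω | (fun s => ζc + (orderStat (fun i => σ (w i ω)) ⌈ε * (N : ℝ) / 2⌉₊) • s) '' S ⊆
        {ζ : Fin n → ℝ | P {v | (G v).mulVec ζ ≤ g v} ≥ ENNReal.ofReal (1 - ε)}} ≥
      ENNReal.ofReal (1 - β) :=
  stmt7_general P G g Z hZ ζc hζc S σ hσ hσmeas ε β hε hβ N hN Q w hwmeas hwindep hwlaw
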